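/- arXiv:1711.01686 — 4 statements merged into one kernel-verified Lean document; each statement's English description precedes it below -/
import Mathlib

section
/- (Baer) The intersection of all maximal nilpotent subgroups of a finite group G equals the hypercenter of G. -/
/-!
Every maximal nilpotent subgroup `U` contains `Z(G)`, since `U ⊔ Z(G)` is a central extension of a
nilpotent group. So the maximal nilpotent subgroups of `G` are the preimages of those of
`G ⧸ Z(G)`; their intersection `D`, like the hypercenter, is the preimage of its counterpart in
`G ⧸ Z(G)`, and by induction on `|G|` it remains to show `D = 1` when `Z(G) = 1`. Automorphisms
permute the maximal nilpotent subgroups, so `D` is normal. If `D ≠ 1`, some Sylow `p`-subgroup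
`Q` meets `D` nontrivially, and the normal subgroup `D ∩ Q` of the nilpotent group `Q` meets
`Z(Q)` in some `x ≠ 1`. An element of `q`-power order, `q ≠ p`, lies together with `D` in a
maximal nilpotent subgroup, where elements of coprime prime-power orders commute. So the
centralizer of `x` contains a Sylow subgroup for every prime, hence is `G`, and `x ∈ Z(G)`.
-/

open scoped commutatorElement

section General

open Subgroup

variable {G : Type*} [Group G]

theorem Subgroup.Normal.inf_center_ne_bot [Group.IsNilpotent G] {N : Subgroup G} (hN : N.Normal)
    (hN₁ : N ≠ ⊥) : N ⊓ center G ≠ ⊥ := by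
  classical
  have hex : ∃ n, N ⊓ upperCentralSeries G n ≠ ⊥ := by
    obtain ⟨n, hn⟩ := Group.IsNilpotent.nilpotent' (G := G)
    exact ⟨n, by rwa [hn, inf_top_eq]⟩
  obtain ⟨k, hk⟩ : ∃ k, Nat.find hex = k + 1 :=
    Nat.exists_eq_succ_of_ne_zero fun h => Nat.find_spec hex (by simp [h])
  have hmin : N ⊓ upperCentralSeries G k = ⊥ := not_ne_iff.mp (Nat.find_min hex (by omega))
  refine ne_bot_of_le_ne_bot (Nat.find_spec hex) fun x hx =>
    ⟨hx.1, mem_center_iff.mpr fun g => ?_⟩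
  rw [hk] at hx
  have hxg : ⁅x, g⁆ ∈ N ⊓ upperCentralSeries G k := by
    refine mem_inf.mpr ⟨?_, mem_upperCentralSeries_succ_iff.mp hx.2 g⟩
    simpa only [commutatorElement_def, mul_assoc] using
      N.mul_mem hx.1 (hN.conj_mem _ (N.inv_mem hx.1) g)
  rw [hmin, mem_bot, commutatorElement_eq_one_iff_commute] at hxg
  exact hxg.symm.eq

theorem commute_of_orderOf_eq_prime_pow [Finite G] [Group.IsNilpotent G] {p q : ℕ} [Fact p.Prime]
    [Fact q.Prime] (hpq : p ≠ q) {x y : G} {a b : ℕ} (hx : orderOf x = p ^ a)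
    (hy : orderOf y = q ^ b) : Commute x y := by
  obtain ⟨P, hP⟩ :=
    (IsPGroup.of_card (G := zpowers x) (p := p) (by rw [Nat.card_zpowers, hx])).exists_le_sylow
  obtain ⟨Q, hQ⟩ :=
    (IsPGroup.of_card (G := zpowers y) (p := q) (by rw [Nat.card_zpowers, hy])).exists_le_sylow
  exact commute_of_normal_of_disjoint P Q inferInstance inferInstance
    (IsPGroup.disjoint_of_ne p q hpq _ _ P.isPGroup' Q.isPGroup') x y (hP (mem_zpowers x))
    (hQ (mem_zpowers y))

theorem Subgroup.eq_top_of_forall_exists_sylow_le [Finite G] (H : Subgroup G)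
    (h : ∀ p, p.Prime → ∃ P : Sylow p G, ↑P ≤ H) : H = ⊤ := by
  refine index_eq_one.mp (Nat.eq_one_iff_not_exists_prime_dvd.mpr fun p hp hdvd => ?_)
  have := Fact.mk hp
  obtain ⟨P, hP⟩ := h p hp
  exact P.not_dvd_index (hdvd.trans (index_dvd_of_le hP))

end General

namespace Subgroup

variable {G H : Type*} [Group G] [Group H]

theorem isNilpotent_map (f : G →* H) {U : Subgroup G}
    (hU : Group.IsNilpotent U) : Group.IsNilpotent (U.map f) :=
  Group.nilpotent_of_surjective (f.subgroupMap U) (f.subgroupMap_surjective U)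

theorem isNilpotent_comap_mk' {K : Subgroup G} [K.Normal] (hK : K ≤ center G)
    {V : Subgroup (G ⧸ K)} (hV : Group.IsNilpotent V) :
    Group.IsNilpotent (V.comap (QuotientGroup.mk' K)) := by
  refine isNilpotent_of_ker_le_center ((QuotientGroup.mk' K).subgroupComap V) ?_
  intro x hx
  have hxK : (x : G) ∈ K := (QuotientGroup.eq_one_iff _).mp (congrArg Subtype.val hx)
  exact mem_center_iff.mpr fun g => Subtype.ext (mem_center_iff.mp (hK hxK) g)

def IsMaximalNilpotent (U : Subgroup G) : Prop :=
  Maximal (fun V : Subgroup G => Group.IsNilpotent V) U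

theorem isMaximalNilpotent_iff {U : Subgroup G} : U.IsMaximalNilpotent ↔
    Group.IsNilpotent U ∧ ∀ V : Subgroup G, Group.IsNilpotent V → U ≤ V → U = V :=
  ⟨fun hU => ⟨hU.1, fun _ hV hUV => hU.eq_of_le hV hUV⟩,
    fun hU => ⟨hU.1, fun V hV hUV => (hU.2 V hV hUV).ge⟩⟩

variable (G) in
def maximalNilpotentInf : Subgroup G :=
  sInf {U : Subgroup G | U.IsMaximalNilpotent}

variable (G) in
def hypercenter : Subgroup G :=
  ⨆ n, upperCentralSeries G n

theorem maximalNilpotentInf_le {U : Subgroup G} (hU : U.IsMaximalNilpotent) :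
    maximalNilpotentInf G ≤ U :=
  sInf_le hU

theorem exists_le_isMaximalNilpotent [Finite G] {U : Subgroup G} (hU : Group.IsNilpotent U) :
    ∃ V : Subgroup G, U ≤ V ∧ V.IsMaximalNilpotent :=
  Finite.exists_le_maximal hU

theorem IsMaximalNilpotent.map_mulEquiv {U : Subgroup G} (hU : U.IsMaximalNilpotent)
    (e : G ≃* H) : (U.map e.toMonoidHom).IsMaximalNilpotent := by
  have := hU.1
  refine ⟨Group.nilpotent_of_mulEquiv (e.subgroupMap U), fun V hV hUV => ?_⟩
  have : Group.IsNilpotent (V.comap e.toMonoidHom) := by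
    have := hV
    rw [comap_equiv_eq_map_symm']
    exact Group.nilpotent_of_mulEquiv (e.symm.subgroupMap V)
  calc V = (V.comap e.toMonoidHom).map e.toMonoidHom :=
        (map_comap_eq_self_of_surjective e.surjective V).symm
    _ ≤ U.map e.toMonoidHom := map_mono (hU.2 this (map_le_iff_le_comap.mp hUV))

instance : (maximalNilpotentInf G).Characteristic :=
  characteristic_iff_map_le.mpr fun φ => le_sInf fun U hU => by
    rw [map_le_iff_le_comap, comap_equiv_eq_map_symm']
    exact maximalNilpotentInf_le (hU.map_mulEquiv φ.symm)

section CentralQuotient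

variable {K : Subgroup G} [K.Normal]

theorem IsMaximalNilpotent.comap_map_mk' (hK : K ≤ center G) {U : Subgroup G}
    (hU : U.IsMaximalNilpotent) :
    (U.map (QuotientGroup.mk' K)).comap (QuotientGroup.mk' K) = U :=
  (hU.eq_of_le (isNilpotent_comap_mk' hK (isNilpotent_map _ hU.1))
    (le_comap_map _ U)).symm

theorem IsMaximalNilpotent.map_mk' (hK : K ≤ center G) {U : Subgroup G}
    (hU : U.IsMaximalNilpotent) :
    (U.map (QuotientGroup.mk' K)).IsMaximalNilpotent := by
  refine ⟨isNilpotent_map _ hU.1, fun V hV hUV => ?_⟩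
  rw [hU.eq_of_le (isNilpotent_comap_mk' hK hV) (map_le_iff_le_comap.mp hUV),
    map_comap_eq_self_of_surjective (QuotientGroup.mk'_surjective K)]

theorem IsMaximalNilpotent.comap_mk' (hK : K ≤ center G) {V : Subgroup (G ⧸ K)}
    (hV : V.IsMaximalNilpotent) :
    (V.comap (QuotientGroup.mk' K)).IsMaximalNilpotent := by
  refine ⟨isNilpotent_comap_mk' hK hV.1, fun W hW hVW => ?_⟩
  have hVW' : V ≤ W.map (QuotientGroup.mk' K) := by
    rw [← map_comap_eq_self_of_surjective (QuotientGroup.mk'_surjective K) V]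
    exact map_mono hVW
  rw [hV.eq_of_le (isNilpotent_map _ hW) hVW']
  exact le_comap_map _ W

theorem maximalNilpotentInf_eq_comap_mk' (hK : K ≤ center G) :
    maximalNilpotentInf G = (maximalNilpotentInf (G ⧸ K)).comap (QuotientGroup.mk' K) := by
  refine le_antisymm ?_ (le_sInf fun U hU => ?_)
  · rw [← map_le_iff_le_comap]
    exact le_sInf fun V hV => map_le_iff_le_comap.mpr (maximalNilpotentInf_le (hV.comap_mk' hK))
  · rw [← hU.comap_map_mk' hK]
    exact comap_mono (maximalNilpotentInf_le (hU.map_mk' hK))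

end CentralQuotient

theorem hypercenter_eq_comap_mk' :
    hypercenter G = (hypercenter (G ⧸ center G)).comap (QuotientGroup.mk' (center G)) := by
  ext x
  simp only [hypercenter, mem_comap, mem_iSup_of_directed (upperCentralSeries_mono _).directed_le]
  simp_rw [← mem_comap, comap_upperCentralSeries_quotient_center]
  exact ⟨fun ⟨n, hn⟩ => ⟨n, upperCentralSeries_mono G n.le_succ hn⟩,
    fun ⟨n, hn⟩ => ⟨n + 1, hn⟩⟩

theorem hypercenter_eq_bot_of_center_eq_bot (hZ : center G = ⊥) : hypercenter G = ⊥ := by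
  refine iSup_eq_bot.mpr fun n => ?_
  induction n with
  | zero => exact upperCentralSeries_zero G
  | succ n ih =>
    refine eq_bot_iff.mpr fun x hx => hZ ▸ mem_center_iff.mpr fun g => ?_
    have hxg := mem_upperCentralSeries_succ_iff.mp hx g
    rw [ih, mem_bot, commutatorElement_eq_one_iff_commute] at hxg
    exact hxg.symm.eq

section Finite

variable [Finite G]

theorem commute_of_mem_maximalNilpotentInf {p q : ℕ} [Fact p.Prime] [Fact q.Prime] (hpq : p ≠ q)
    {x y : G} (hxD : x ∈ maximalNilpotentInf G) {a b : ℕ} (hx : orderOf x = p ^ a)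
    (hy : orderOf y = q ^ b) : Commute x y := by
  have : Group.IsNilpotent (zpowers y) :=
    (IsPGroup.of_card (G := zpowers y) (p := q) (by rw [Nat.card_zpowers, hy])).isNilpotent
  obtain ⟨U, hyU, hU⟩ := exists_le_isMaximalNilpotent this
  have := hU.1
  have hxU := maximalNilpotentInf_le hU hxD
  simpa using (commute_of_orderOf_eq_prime_pow hpq (x := ⟨x, hxU⟩)
    (y := ⟨y, hyU (mem_zpowers y)⟩) (by rwa [orderOf_mk]) (by rwa [orderOf_mk])).map U.subtype

theorem mem_center_of_mem_maximalNilpotentInf {p : ℕ} [Fact p.Prime] (Q : Sylow p G) {x : G}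
    (hxD : x ∈ maximalNilpotentInf G) (hxQ : x ∈ Q) (hx : ∀ y ∈ Q, Commute x y) :
    x ∈ center G := by
  suffices centralizer {x} = ⊤ from
    mem_center_iff.mpr fun g => mem_centralizer_singleton_iff.mp (this ▸ mem_top g)
  refine eq_top_of_forall_exists_sylow_le _ fun r hr => ?_
  have := Fact.mk hr
  by_cases hrp : r = p
  · subst hrp
    exact ⟨Q, fun y hy => mem_centralizer_singleton_iff.mpr (hx y hy).eq.symm⟩
  obtain ⟨R⟩ : Nonempty (Sylow r G) := inferInstance
  refine ⟨R, fun y hy => mem_centralizer_singleton_iff.mpr (Eq.symm ?_)⟩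
  obtain ⟨a, ha⟩ := IsPGroup.iff_orderOf.mp Q.isPGroup' ⟨x, hxQ⟩
  obtain ⟨b, hb⟩ := IsPGroup.iff_orderOf.mp R.isPGroup' ⟨y, hy⟩
  rw [orderOf_mk] at ha hb
  exact (commute_of_mem_maximalNilpotentInf (Ne.symm hrp) hxD ha hb).eq

theorem maximalNilpotentInf_eq_bot_of_center_eq_bot (hZ : center G = ⊥) :
    maximalNilpotentInf G = ⊥ := by
  by_contra hD
  obtain ⟨p, hp, hpD⟩ := Nat.exists_prime_and_dvd ((one_lt_card_iff_ne_bot _).mpr hD).ne'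
  have := Fact.mk hp
  obtain ⟨x, hx⟩ := exists_prime_orderOf_dvd_card' p hpD
  obtain ⟨Q, hxQ⟩ := (IsPGroup.of_card (G := zpowers (x : G)) (p := p) (n := 1)
    (by rw [Nat.card_zpowers, orderOf_coe, hx, pow_one])).exists_le_sylow
  have : Group.IsNilpotent Q := Q.isPGroup'.isNilpotent
  have hDQ : (maximalNilpotentInf G).subgroupOf Q ≠ ⊥ := by
    refine ne_bot_iff_exists_ne_one.mpr
      ⟨⟨⟨x, hxQ (mem_zpowers _)⟩, x.2⟩, fun h1 => hp.one_lt.ne' ?_⟩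
    rw [← hx, orderOf_eq_one_iff]
    exact Subtype.ext
      (congrArg (fun w : (maximalNilpotentInf G).subgroupOf Q => ((w : Q) : G)) h1)
  obtain ⟨⟨z, hzD, hzZ⟩, hz1⟩ := ne_bot_iff_exists_ne_one.mp
    (((normal_of_characteristic _).subgroupOf (Q : Subgroup G)).inf_center_ne_bot hDQ)
  have hzG : (z : G) ∈ center G :=
    mem_center_of_mem_maximalNilpotentInf Q (mem_subgroupOf.mp hzD) z.2
      fun y hy => congrArg Subtype.val (mem_center_iff.mp hzZ ⟨y, hy⟩).symm
  rw [hZ, mem_bot] at hzG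
  exact hz1 (Subtype.ext (Subtype.ext hzG))

end Finite

theorem maximalNilpotentInf_eq_hypercenter (G : Type*) [Group G] [Finite G] :
    maximalNilpotentInf G = hypercenter G := by
  induction h : Nat.card G using Nat.strong_induction_on generalizing G with
  | _ n ih =>
    by_cases hZ : center G = ⊥
    · rw [maximalNilpotentInf_eq_bot_of_center_eq_bot hZ, hypercenter_eq_bot_of_center_eq_bot hZ]
    have hlt : Nat.card (G ⧸ center G) < n := by
      rw [← h, card_eq_card_quotient_mul_card_subgroup (center G)]
      exact lt_mul_of_one_lt_right Nat.card_pos ((one_lt_card_iff_ne_bot _).mpr hZ)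
    rw [maximalNilpotentInf_eq_comap_mk' le_rfl, hypercenter_eq_comap_mk',
      ih _ hlt (G ⧸ center G) rfl]

end Subgroup

/-- (Baer) The intersection of all maximal nilpotent subgroups of a finite group `G`
equals the hypercenter of `G` (the terminal member of the upper central series). -/
theorem stmt_1 (G : Type*) [Group G] [Finite G] :
    sInf {U : Subgroup G | Group.IsNilpotent U ∧
        ∀ V : Subgroup G, Group.IsNilpotent V → U ≤ V → U = V} =
      ⨆ n : ℕ, upperCentralSeries G n := by
  simp_rw [← Subgroup.isMaximalNilpotent_iff]
  exact Subgroup.maximalNilpotentInf_eq_hypercenter G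
end

section
/- Let A and B be normal subgroups of a finite group G with G = AB, and let N be a minimal normal subgroup of G. If every subnormal subgroup of N is normal in A and every subnormal subgroup of N is normal in B, and N is a direct product of nonabelian simple groups, then N is simple. -/
/-- A subgroup `H` of `G` is subnormal if there is a chain
`H = H_0 ⊴ H_1 ⊴ ... ⊴ H_k = G` with each term normal in the next. -/
def IsSubnormal {G : Type*} [Group G] (H : Subgroup G) : Prop :=
  ∃ (k : ℕ) (c : Fin (k + 1) → Subgroup G), c 0 = H ∧ c (Fin.last k) = ⊤ ∧
    ∀ i : Fin k, c i.castSucc ≤ c i.succ ∧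
      ∀ g ∈ c i.succ, ∀ x ∈ c i.castSucc, g * x * g⁻¹ ∈ c i.castSucc

/-!
Any simple factor `H` of `N` is normalized by the other factors, since they centralize it, so
`H ⊴ N` is subnormal in `N`. Hence `A` and `B` normalize `H`, so `H ⊴ AB = G`, and minimality of
`N` forces `H = N`.
-/

theorem isSubnormal_of_normal {G : Type*} [Group G] (H : Subgroup G) [hH : H.Normal] :
    IsSubnormal H :=
  ⟨1, ![H, ⊤], rfl, rfl, fun i => by
    obtain rfl : i = 0 := Subsingleton.elim _ _
    exact ⟨le_top, fun g _ x hx => hH.conj_mem x hx g⟩⟩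

theorem iSup_le_normalizer_of_commute {G ι : Type*} [Group G] (Hs : ι → Subgroup G)
    (hcomm : ∀ i j, i ≠ j → ∀ x ∈ Hs i, ∀ y ∈ Hs j, Commute x y) (i : ι) :
    ⨆ j, Hs j ≤ Subgroup.normalizer (Hs i : Set G) := by
  refine iSup_le fun j => ?_
  rcases eq_or_ne j i with rfl | hji
  · exact Subgroup.le_normalizer
  · refine le_trans (fun y hy => ?_) (Subgroup.centralizer_le_normalizer _)
    exact Subgroup.mem_centralizer_iff.mpr fun x hx => (hcomm i j hji.symm x hx y hy).eq

theorem stmt_12_general {G : Type*} [Group G] (A B N : Subgroup G)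
    (hAB : A ⊔ B = ⊤)
    (hbot : N ≠ ⊥)
    (hmin : ∀ K : Subgroup G, K.Normal → K ≤ N → K ≠ ⊥ → K = N)
    {n : ℕ} (Hs : Fin n → Subgroup G)
    (hle : ∀ i, Hs i ≤ N)
    (hsimple : ∀ i, IsSimpleGroup (Hs i))
    (hcomm : ∀ i j, i ≠ j → ∀ x ∈ Hs i, ∀ y ∈ Hs j, Commute x y)
    (hsup : ⨆ i, Hs i = N)
    (hsubA : ∀ X : Subgroup ↥N, IsSubnormal X →
      ∀ a ∈ A, ∀ x ∈ X.map N.subtype, a * x * a⁻¹ ∈ X.map N.subtype)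
    (hsubB : ∀ X : Subgroup ↥N, IsSubnormal X →
      ∀ b ∈ B, ∀ x ∈ X.map N.subtype, b * x * b⁻¹ ∈ X.map N.subtype) :
    IsSimpleGroup ↥N := by
  obtain ⟨i⟩ : Nonempty (Fin n) := by
    by_contra h
    rw [not_nonempty_iff] at h
    exact hbot (by rw [← hsup, iSup_of_empty])
  have hnormal_in_N : ((Hs i).subgroupOf N).Normal :=
    (Subgroup.normal_subgroupOf_iff_le_normalizer (hle i)).mpr
      (hsup ▸ iSup_le_normalizer_of_commute Hs hcomm i)
  have hsubn := isSubnormal_of_normal ((Hs i).subgroupOf N)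
  have hmap : ((Hs i).subgroupOf N).map N.subtype = Hs i := by
    rw [Subgroup.subgroupOf_map_subtype, inf_eq_left.mpr (hle i)]
  have hnormal : (Hs i).Normal := by
    rw [← Subgroup.normalizer_eq_top_iff, eq_top_iff, ← hAB, sup_le_iff,
      Subgroup.le_normalizer_iff, Subgroup.le_normalizer_iff, ← hmap]
    exact ⟨hsubA _ hsubn, hsubB _ hsubn⟩
  have hne : Hs i ≠ ⊥ := (Subgroup.nontrivial_iff_ne_bot _).mp (hsimple i).toNontrivial
  obtain rfl := hmin _ hnormal (hle i) hne
  exact hsimple i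

/-- Let `G = AB` with `A, B ⊴ G` and let `N` be a minimal normal subgroup of `G` which
is an internal direct product of nonabelian simple subgroups.  If every subnormal
subgroup of `N` is normal in `A` and in `B`, then `N` is simple. -/
theorem stmt_12 {G : Type*} [Group G] [Finite G] (A B N : Subgroup G)
    (hA : A.Normal) (hB : B.Normal) (hAB : A ⊔ B = ⊤)
    (hN : N.Normal) (hbot : N ≠ ⊥)
    (hmin : ∀ K : Subgroup G, K.Normal → K ≤ N → K ≠ ⊥ → K = N)
    {n : ℕ} (Hs : Fin n → Subgroup G)
    (hle : ∀ i, Hs i ≤ N)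
    (hsimple : ∀ i, IsSimpleGroup (Hs i))
    (hnonab : ∀ i, ∃ x ∈ Hs i, ∃ y ∈ Hs i, x * y ≠ y * x)
    (hcomm : ∀ i j, i ≠ j → ∀ x ∈ Hs i, ∀ y ∈ Hs j, Commute x y)
    (hind : iSupIndep Hs)
    (hsup : ⨆ i, Hs i = N)
    (hsubA : ∀ X : Subgroup ↥N, IsSubnormal X →
      ∀ a ∈ A, ∀ x ∈ X.map N.subtype, a * x * a⁻¹ ∈ X.map N.subtype)
    (hsubB : ∀ X : Subgroup ↥N, IsSubnormal X →
      ∀ b ∈ B, ∀ x ∈ X.map N.subtype, b * x * b⁻¹ ∈ X.map N.subtype) :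
    IsSimpleGroup ↥N :=
  stmt_12_general A B N hAB hbot hmin Hs hle hsimple hcomm hsup hsubA hsubB
end

section
/- Let G be a finite group in which every chief factor is a simple group (a c-supersoluble group). Then there is a perfect normal subgroup D of G such that G/D is supersoluble. -/
/-- `H/K` is a chief factor of `G`: both are normal in `G`, `K < H`, and there is
no normal subgroup of `G` strictly between `K` and `H`. -/
def IsChiefFactor (G : Type*) [Group G] (H K : Subgroup G) : Prop :=
  H.Normal ∧ K.Normal ∧ K < H ∧ ∀ L : Subgroup G, L.Normal → K < L → L ≤ H → L = H

/-- The factor `H/K` is a simple group: `K < H` and there is no intermediate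
subgroup normalized by `H` other than `K` and `H`. -/
def IsSimpleFactor (G : Type*) [Group G] (H K : Subgroup G) : Prop :=
  K < H ∧ ∀ L : Subgroup G, K ≤ L → L ≤ H →
    (∀ h ∈ H, ∀ x ∈ L, h * x * h⁻¹ ∈ L) → L = K ∨ L = H

/-- A (finite) group is supersoluble iff every chief factor is cyclic of prime order. -/
def IsSupersoluble (G : Type*) [Group G] : Prop :=
  ∀ H K : Subgroup G, IsChiefFactor G H K → ∃ p : ℕ, p.Prime ∧ K.relIndex H = p

/-- A group is c-supersoluble iff every chief factor is a simple group. -/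
def IsCSupersoluble (G : Type*) [Group G] : Prop :=
  ∀ H K : Subgroup G, IsChiefFactor G H K → IsSimpleFactor G H K


/-!
The solvable residual `D`, the last term of the derived series, is perfect, and `G ⧸ D` is
solvable. Chief factors of `G ⧸ D` pull back to chief factors of `G`, so they are simple; being
also solvable, they are abelian, hence cyclic of prime order.
-/

section

open Subgroup

variable {G Q : Type*} [Group G] [Group Q]

theorem exists_derivedSeries_succ_eq [WellFoundedLT (Subgroup G)] :
    ∃ n, derivedSeries G (n + 1) = derivedSeries G n := by
  obtain ⟨n, hn⟩ := WellFoundedLT.antitone_chain_condition (derivedSeries_antitone (G := G))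
  exact ⟨n, (hn (n + 1) n.le_succ).symm⟩

instance isSolvable_quotient_derivedSeries (n : ℕ) : Group.IsSolvable (G ⧸ derivedSeries G n) :=
  ⟨n, by
    rw [← map_derivedSeries_eq (QuotientGroup.mk'_surjective _), QuotientGroup.map_mk'_self]⟩

theorem IsChiefFactor.comap {φ : G →* Q} (hφ : Function.Surjective φ) {H K : Subgroup Q}
    (hc : IsChiefFactor Q H K) : IsChiefFactor G (H.comap φ) (K.comap φ) := by
  obtain ⟨hH, hK, hKH, hmax⟩ := hc
  refine ⟨hH.comap φ, hK.comap φ, (comap_lt_comap_of_surjective hφ).2 hKH,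
    fun L hL hKL hLH => ?_⟩
  have hker : φ.ker ≤ L := (φ.ker_le_comap K).trans hKL.le
  rw [← comap_map_eq_self hker] at hKL hLH ⊢
  rw [hmax (L.map φ) (hL.map φ hφ) ((comap_lt_comap_of_surjective hφ).1 hKL)
    ((comap_le_comap_of_surjective hφ).1 hLH)]

theorem IsSimpleFactor.of_comap {φ : G →* Q} (hφ : Function.Surjective φ) {H K : Subgroup Q}
    (hs : IsSimpleFactor G (H.comap φ) (K.comap φ)) : IsSimpleFactor Q H K := by
  refine ⟨(comap_lt_comap_of_surjective hφ).1 hs.1, fun L hKL hLH hnorm => ?_⟩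
  have := hs.2 (L.comap φ) (comap_mono hKL) (comap_mono hLH) fun h hh x hx => by
    simpa using hnorm _ hh _ hx
  simpa only [(comap_injective hφ).eq_iff] using this

theorem IsCSupersoluble.of_surjective {φ : G →* Q} (hφ : Function.Surjective φ)
    (hG : IsCSupersoluble G) : IsCSupersoluble Q :=
  fun _ _ hc => IsSimpleFactor.of_comap hφ (hG _ _ (hc.comap hφ))

theorem IsSimpleFactor.isSimpleGroup {H K : Subgroup G} [K.Normal] (hs : IsSimpleFactor G H K) :
    IsSimpleGroup (H ⧸ K.subgroupOf H) := by
  obtain ⟨hKH, hmax⟩ := hs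
  set π := QuotientGroup.mk' (K.subgroupOf H)
  have hπ : Function.Surjective π := QuotientGroup.mk'_surjective _
  have hker : π.ker = K.subgroupOf H := QuotientGroup.ker_mk' _
  refine { toNontrivial := ?_, eq_bot_or_eq_top_of_normal := fun N hN => ?_ }
  · obtain ⟨x, hxH, hxK⟩ := SetLike.exists_of_lt hKH
    exact ⟨π ⟨x, hxH⟩, 1, by
      rwa [Ne, QuotientGroup.mk'_apply, QuotientGroup.eq_one_iff, mem_subgroupOf]⟩
  set L := (N.comap π).map H.subtype
  have hL : L.subgroupOf H = N.comap π := by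
    rw [← comap_subtype, comap_map_eq_self_of_injective H.subtype_injective]
  have hKL : K ≤ L :=
    (map_subgroupOf_eq_of_le hKH.le).symm.le.trans (map_mono (hker.ge.trans (π.ker_le_comap N)))
  have hnorm : ∀ h ∈ H, ∀ x ∈ L, h * x * h⁻¹ ∈ L := by
    rintro h hh _ ⟨m, hm, rfl⟩
    exact ⟨⟨h, hh⟩ * m * ⟨h, hh⟩⁻¹, (hN.comap π).conj_mem m hm _, rfl⟩
  rcases hmax L hKL (map_subtype_le _) hnorm with hLK | hLH
  · left
    apply comap_injective hπ
    rw [MonoidHom.comap_bot, hker, ← hL, hLK]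
  · right
    apply comap_injective hπ
    rw [comap_top, ← hL, hLH, subgroupOf_self]

theorem IsCSupersoluble.isSupersoluble [Group.IsSolvable G] (hG : IsCSupersoluble G) :
    IsSupersoluble G := by
  intro H K hc
  have : K.Normal := hc.2.1
  have := (hG H K hc).isSimpleGroup
  let : CommGroup (H ⧸ K.subgroupOf H) :=
    { mul_comm := IsSimpleGroup.comm_iff_isSolvable.2 inferInstance }
  exact ⟨_, IsSimpleGroup.prime_card, rfl⟩

end

/-- A finite c-supersoluble group `G` has a perfect normal subgroup `D` with `G/D`
supersoluble (take `D` to be the supersoluble residual). -/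
theorem stmt_14 {G : Type*} [Group G] [Finite G] (h : IsCSupersoluble G) :
    ∃ (D : Subgroup G) (hD : D.Normal), ⁅D, D⁆ = D ∧ IsSupersoluble (G ⧸ D) := by
  obtain ⟨n, hn⟩ := exists_derivedSeries_succ_eq (G := G)
  refine ⟨derivedSeries G n, derivedSeries_normal G n, ?_, ?_⟩
  · rw [← derivedSeries_succ, hn]
  · exact (h.of_surjective (QuotientGroup.mk'_surjective _)).isSupersoluble
end

section
/- Let G be a finite group with normal subgroups Z ≤ S such that every chief factor of G below Z is cyclic of prime order, S/Z is a direct product of G-invariant simple nonabelian groups, and G/S is supersoluble. Then every chief factor of G is simple, i.e., G is c-supersoluble. -/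
open Subgroup
open scoped Pointwise

section ChiefFactors

variable {G : Type*} [Group G]

theorem Subgroup.sup_inf_assoc_of_le_of_normal {A C : Subgroup G} (B : Subgroup G) [B.Normal]
    (h : A ≤ C) : (A ⊔ B) ⊓ C = A ⊔ B ⊓ C := by
  refine le_antisymm (fun x ⟨hxAB, hxC⟩ => ?_)
    (sup_le (le_inf le_sup_left h) (inf_le_inf_right C le_sup_right))
  have hx : x ∈ (A : Set G) * ((B ⊓ C : Subgroup G) : Set G) := by
    rw [mul_inf_assoc A B C h, ← mul_normal]
    exact ⟨hxAB, hxC⟩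
  obtain ⟨a, ha, b, hb, rfl⟩ := hx
  exact mul_mem_sup ha hb

theorem isSimpleFactor_iff_le_normalizer {H K : Subgroup G} :
    IsSimpleFactor G H K ↔
      K < H ∧ ∀ L : Subgroup G, K ≤ L → L ≤ H → H ≤ normalizer L → L = K ∨ L = H := by
  simp only [IsSimpleFactor, le_normalizer_iff]

theorem isSimpleFactor_of_relIndex_eq_prime {H K : Subgroup G} {p : ℕ} (hp : p.Prime)
    (hKH : K ≤ H) (h : K.relIndex H = p) : IsSimpleFactor G H K := by
  refine ⟨hKH.lt_of_ne ?_, fun L hKL hLH _ => ?_⟩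
  · rintro rfl
    rw [relIndex_self] at h
    exact hp.one_lt.ne h
  have hmul := relIndex_mul_relIndex K L H hKL hLH
  rw [h] at hmul
  rcases hp.eq_one_or_self_of_dvd _ (Dvd.intro _ hmul) with h1 | hp'
  · exact .inl (le_antisymm (relIndex_eq_one.mp h1) hKL)
  · rw [hp', Nat.mul_eq_left hp.ne_zero] at hmul
    exact .inr (le_antisymm hLH (relIndex_eq_one.mp hmul))

theorem isSimpleFactor_bot_of_isSimpleGroup {H : Subgroup G} [IsSimpleGroup H] :
    IsSimpleFactor G H ⊥ := by
  rw [isSimpleFactor_iff_le_normalizer]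
  refine ⟨bot_lt_iff_ne_bot.mpr ((nontrivial_iff_ne_bot H).mp inferInstance),
    fun L _ hLH hnorm => ?_⟩
  have : (L.subgroupOf H).Normal := (normal_subgroupOf_iff_le_normalizer hLH).mpr hnorm
  rcases IsSimpleGroup.eq_bot_or_eq_top_of_normal _ this with h | h
  · rw [subgroupOf_eq_bot] at h
    exact .inl (le_bot_iff.mp fun x hx => h.le_bot ⟨hx, hLH hx⟩)
  · exact .inr (le_antisymm hLH (subgroupOf_eq_top.mp h))

theorem IsSimpleFactor.of_inf {H K N : Subgroup G} [H.Normal] [N.Normal]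
    (hsup : K ⊔ H ⊓ N = H) (h : IsSimpleFactor G (H ⊓ N) (K ⊓ N)) : IsSimpleFactor G H K := by
  rw [isSimpleFactor_iff_le_normalizer] at h ⊢
  obtain ⟨hlt, hsimple⟩ := h
  have hKH : K ≤ H := hsup ▸ le_sup_left
  refine ⟨hKH.lt_of_ne fun hKH' => hlt.not_ge (le_inf_iff.mpr ⟨inf_le_left.trans hKH'.ge,
    inf_le_right⟩), fun L hKL hLH hnorm => ?_⟩
  have hnormN : H ⊓ N ≤ normalizer (L ⊓ N : Subgroup G) :=
    le_inf (inf_le_left.trans hnorm) le_normalizer_of_normal |>.trans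
      inf_normalizer_le_normalizer_inf
  rcases hsimple (L ⊓ N) (inf_le_inf_right N hKL) (inf_le_inf_right N hLH) hnormN with h | h
  · left
    calc L = (K ⊔ H ⊓ N) ⊓ L := by rw [hsup, inf_eq_right.mpr hLH]
      _ = K ⊔ H ⊓ N ⊓ L := sup_inf_assoc_of_le_of_normal _ hKL
      _ = K ⊔ K ⊓ N := by rw [inf_right_comm, inf_eq_right.mpr hLH, h]
      _ = K := sup_eq_left.mpr inf_le_left
  · right
    exact le_antisymm hLH (hsup ▸ sup_le hKL (h ▸ inf_le_left))

theorem IsSimpleFactor.of_sup {H K N : Subgroup G} [N.Normal] (hKH : K ≤ H) (hinf : H ⊓ N ≤ K)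
    (h : IsSimpleFactor G (H ⊔ N) (K ⊔ N)) : IsSimpleFactor G H K := by
  rw [isSimpleFactor_iff_le_normalizer] at h ⊢
  obtain ⟨hlt, hsimple⟩ := h
  have hrecover : ∀ L : Subgroup G, K ≤ L → L ≤ H → (L ⊔ N) ⊓ H = L := fun L hKL hLH => by
    rw [sup_inf_assoc_of_le_of_normal N hLH, inf_comm, sup_eq_left]
    exact hinf.trans hKL
  refine ⟨hKH.lt_of_ne fun hKH' => hlt.ne (hKH' ▸ rfl), fun L hKL hLH hnorm => ?_⟩
  have hnormN : H ⊔ N ≤ normalizer (L ⊔ N : Subgroup G) :=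
    sup_le (le_inf hnorm le_normalizer_of_normal |>.trans
      (normalizer_inf_normalizer_le_normalizer_sup L N))
      (le_sup_right.trans le_normalizer)
  rcases hsimple (L ⊔ N) (sup_le_sup_right hKL N) (sup_le_sup_right hLH N) hnormN with h | h
  · exact .inl (by rw [← hrecover L hKL hLH, h, hrecover K le_rfl hKH])
  · exact .inr (by rw [← hrecover L hKL hLH, h, hrecover H hKH le_rfl])

theorem IsSimpleFactor.of_map {G' : Type*} [Group G'] {f : G →* G'} {H K : Subgroup G}
    (hKH : K ≤ H) (hker : f.ker ≤ K) (h : IsSimpleFactor G' (H.map f) (K.map f)) :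
    IsSimpleFactor G H K := by
  rw [isSimpleFactor_iff_le_normalizer] at h ⊢
  obtain ⟨hlt, hsimple⟩ := h
  refine ⟨hKH.lt_of_ne fun hKH' => hlt.ne (hKH' ▸ rfl), fun L hKL hLH hnorm => ?_⟩
  have hkerL : f.ker ≤ L := hker.trans hKL
  rcases hsimple (L.map f) (map_mono hKL) (map_mono hLH)
      ((map_mono hnorm).trans (le_normalizer_map f)) with h | h
  · exact .inl (map_injective_of_ker_le f hkerL hker h)
  · exact .inr (map_injective_of_ker_le f hkerL (hker.trans hKH) h)

namespace IsChiefFactor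

variable {H K : Subgroup G}

theorem le (hc : IsChiefFactor G H K) : K ≤ H := hc.2.2.1.le

theorem eq_of_not_le (hc : IsChiefFactor G H K) {L : Subgroup G} [L.Normal] (hKL : K ≤ L)
    (hLH : L ≤ H) (hLK : ¬ L ≤ K) : L = H :=
  hc.2.2.2 L ‹_› (lt_of_le_not_ge hKL hLK) hLH

theorem sup_inf_eq (hc : IsChiefFactor G H K) (N : Subgroup G) [N.Normal]
    (h : ¬ H ⊓ N ≤ K) : K ⊔ H ⊓ N = H :=
  have := hc.1; have := hc.2.1
  hc.eq_of_not_le le_sup_left (sup_le hc.le inf_le_left) fun h' => h (le_sup_right.trans h')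

theorem inf (hc : IsChiefFactor G H K) (N : Subgroup G) [N.Normal] (h : ¬ H ⊓ N ≤ K) :
    IsChiefFactor G (H ⊓ N) (K ⊓ N) := by
  have := hc.1; have := hc.2.1
  refine ⟨inferInstance, inferInstance,
    (inf_le_inf_right N hc.le).lt_of_ne fun he => h (he ▸ inf_le_left), fun L _ hlt hle => ?_⟩
  have hLN : L ≤ N := hle.trans inf_le_right
  have hKL : K ⊔ L = H := hc.eq_of_not_le le_sup_left (sup_le hc.le (hle.trans inf_le_left))
    fun h' => hlt.not_ge (le_inf (le_sup_right.trans h') hLN)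
  calc L = L ⊔ K ⊓ N := (sup_eq_left.mpr hlt.le).symm
    _ = (L ⊔ K) ⊓ N := (sup_inf_assoc_of_le_of_normal K hLN).symm
    _ = H ⊓ N := by rw [sup_comm, hKL]

theorem sup (hc : IsChiefFactor G H K) (N : Subgroup G) [N.Normal] (h : H ⊓ N ≤ K) :
    IsChiefFactor G (H ⊔ N) (K ⊔ N) := by
  have := hc.1; have := hc.2.1
  have hrecover : (K ⊔ N) ⊓ H = K := by
    rw [sup_inf_assoc_of_le_of_normal N hc.le, inf_comm, sup_eq_left.mpr h]
  refine ⟨inferInstance, inferInstance, (sup_le_sup_right hc.le N).lt_of_ne fun he =>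
    hc.2.2.1.not_ge (hrecover ▸ le_inf (he ▸ le_sup_left) le_rfl), fun L _ hlt hle => ?_⟩
  have hNL : N ≤ L := le_sup_right.trans hlt.le
  have hHL : L ⊓ H = H := by
    refine hc.eq_of_not_le (le_inf (le_sup_left.trans hlt.le) hc.le) inf_le_right fun h' => ?_
    have : L ≤ N ⊔ K := by
      calc L = (N ⊔ H) ⊓ L := by rw [sup_comm, inf_eq_right.mpr hle]
        _ = N ⊔ H ⊓ L := sup_inf_assoc_of_le_of_normal H hNL
        _ ≤ N ⊔ K := sup_le_sup_left (inf_comm H L ▸ h') N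
    exact hlt.not_ge (sup_comm K N ▸ this)
  exact le_antisymm hle (sup_le (hHL ▸ inf_le_left) hNL)

theorem map {G' : Type*} [Group G'] {f : G →* G'} (hf : Function.Surjective f)
    (hc : IsChiefFactor G H K) (hker : f.ker ≤ K) : IsChiefFactor G' (H.map f) (K.map f) := by
  have hcomap : ∀ {X : Subgroup G}, f.ker ≤ X → (X.map f).comap f = X := fun hX => by
    rw [comap_map_eq, sup_eq_left.mpr hX]
  refine ⟨hc.1.map f hf, hc.2.1.map f hf, (map_mono hc.le).lt_of_ne fun he =>
    hc.2.2.1.ne (map_injective_of_ker_le f hker (hker.trans hc.le) he), fun L hL hlt hle => ?_⟩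
  have : (L.comap f).Normal := hL.comap f
  have hKL : K ≤ L.comap f := hcomap hker ▸ comap_mono hlt.le
  have hLH : L.comap f ≤ H := hcomap (hker.trans hc.le) ▸ comap_mono hle
  have hcomapL : L.comap f = H := hc.eq_of_not_le hKL hLH fun h' =>
    hlt.not_ge ((map_comap_eq_self_of_surjective hf L).ge.trans (map_mono h'))
  rw [← hcomapL, map_comap_eq_self_of_surjective hf]

theorem isSimpleFactor_of_inf_of_sup (hc : IsChiefFactor G H K) (N : Subgroup G) [N.Normal]
    (hinf : IsChiefFactor G (H ⊓ N) (K ⊓ N) → IsSimpleFactor G (H ⊓ N) (K ⊓ N))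
    (hsup : IsChiefFactor G (H ⊔ N) (K ⊔ N) → IsSimpleFactor G (H ⊔ N) (K ⊔ N)) :
    IsSimpleFactor G H K := by
  have := hc.1
  by_cases h : H ⊓ N ≤ K
  · exact (hsup (hc.sup N h)).of_sup hc.le h
  · exact (hinf (hc.inf N h)).of_inf (hc.sup_inf_eq N h)

end IsChiefFactor

end ChiefFactors

section Products

variable {Q : Type*} [Group Q]

theorem Subgroup.center_eq_bot_of_isSimpleGroup {H : Subgroup Q} [IsSimpleGroup H]
    (h : ∃ x ∈ H, ∃ y ∈ H, x * y ≠ y * x) : center H = ⊥ := by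
  refine (IsSimpleGroup.eq_bot_or_eq_top_of_normal _ inferInstance).resolve_right fun htop => ?_
  obtain ⟨x, hx, y, hy, hxy⟩ := h
  have hy : (⟨y, hy⟩ : H) ∈ center H := htop ▸ mem_top _
  exact hxy (congrArg Subtype.val (mem_center_iff.mp hy ⟨x, hx⟩))

theorem Subgroup.disjoint_of_isSimpleGroup_of_not_le {H W : Subgroup Q} [IsSimpleGroup H]
    [W.Normal] (h : ¬ H ≤ W) : Disjoint H W :=
  (IsSimpleGroup.eq_bot_or_eq_top_of_normal (W.subgroupOf H) inferInstance).elim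
    (fun hb => (subgroupOf_eq_bot.mp hb).symm) fun ht => absurd (subgroupOf_eq_top.mp ht) h

variable {ι : Type*} {Hs : ι → Subgroup Q}

theorem eq_one_of_mem_biSup_of_commute (hinv : ∀ i, (Hs i).Normal)
    (hcenter : ∀ i, center (Hs i) = ⊥) (hind : iSupIndep Hs) (s : Finset ι) {x : Q}
    (hx : x ∈ ⨆ i ∈ s, Hs i) (hcomm : ∀ i ∈ s, ∀ y ∈ Hs i, Commute x y) : x = 1 := by
  classical
  induction s using Finset.induction_on generalizing x with
  | empty => simpa using hx
  | insert j s hj ih =>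
    rw [Finset.iSup_insert, mem_sup_of_normal_left] at hx
    obtain ⟨c, hc, d, hd, rfl⟩ := hx
    have hdisj : Disjoint (Hs j) (⨆ i ∈ s, Hs i) := by
      simpa using hind.disjoint_biSup (y := (s : Set ι)) (by simpa using hj)
    have hdj : ∀ y ∈ Hs j, Commute d y := fun y hy =>
      (commute_of_normal_of_disjoint _ _ (hinv j) inferInstance hdisj y d hy hd).symm
    have hcj : ∀ y ∈ Hs j, Commute c y := fun y hy => by
      simpa using (hcomm j (s.mem_insert_self j) y hy).mul_left (hdj y hy).inv_left
    have hc1 : c = 1 := by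
      have : (⟨c, hc⟩ : Hs j) ∈ center (Hs j) :=
        mem_center_iff.mpr fun y => Subtype.ext (hcj y y.2).symm.eq
      rw [hcenter j] at this
      exact congrArg Subtype.val (mem_bot.mp this)
    subst hc1
    rw [one_mul] at hcomm ⊢
    exact ih hd fun i hi => hcomm i (Finset.mem_insert_of_mem hi)

theorem le_biSup_of_normal [Finite ι] (hinv : ∀ i, (Hs i).Normal)
    (hsimple : ∀ i, IsSimpleGroup (Hs i)) (hcenter : ∀ i, center (Hs i) = ⊥)
    (hind : iSupIndep Hs) {W : Subgroup Q} [W.Normal] (hle : W ≤ ⨆ i, Hs i) :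
    W ≤ ⨆ (i) (_ : Hs i ≤ W), Hs i := by
  classical
  have := Fintype.ofFinite ι
  intro w hw
  have hw' := hle hw
  rw [iSup_split _ fun i => Hs i ≤ W, mem_sup_of_normal_left] at hw'
  obtain ⟨a, ha, b, hb, rfl⟩ := hw'
  have hbW : b ∈ W := by
    have haW : a ∈ W := (iSup₂_le fun _ h => h : ⨆ (i) (_ : Hs i ≤ W), Hs i ≤ W) ha
    simpa using mul_mem (inv_mem haW) hw
  have hb1 : b = 1 := by
    refine eq_one_of_mem_biSup_of_commute hinv hcenter hind
      (Finset.univ.filter fun i => ¬ Hs i ≤ W) (by simpa using hb) fun i hi y hy => ?_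
    have := hsimple i
    exact (commute_of_normal_of_disjoint _ _ (hinv i) inferInstance
      (disjoint_of_isSimpleGroup_of_not_le (by simpa using hi)) y b hy hbW).symm
  simpa [hb1] using ha

theorem IsChiefFactor.isSimpleFactor_of_le_iSup [Finite ι] (hinv : ∀ i, (Hs i).Normal)
    (hsimple : ∀ i, IsSimpleGroup (Hs i)) (hcenter : ∀ i, center (Hs i) = ⊥)
    (hind : iSupIndep Hs) {M N : Subgroup Q} (hc : IsChiefFactor Q M N)
    (hle : M ≤ ⨆ i, Hs i) : IsSimpleFactor Q M N := by
  have := hc.1; have := hc.2.1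
  obtain ⟨i, hiM, hiN⟩ : ∃ i, Hs i ≤ M ∧ ¬ Hs i ≤ N := by
    by_contra! h
    exact hc.2.2.1.not_ge ((le_biSup_of_normal hinv hsimple hcenter hind hle).trans
      (iSup₂_le h))
  have := hinv i; have := hsimple i
  have hMi : M ⊓ Hs i = Hs i := inf_eq_right.mpr hiM
  refine IsSimpleFactor.of_inf (hc.sup_inf_eq (Hs i) (by rwa [hMi])) ?_
  rw [hMi, inf_comm, (disjoint_of_isSimpleGroup_of_not_le hiN).eq_bot]
  exact isSimpleFactor_bot_of_isSimpleGroup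

end Products

theorem stmt_16_general {G : Type*} [Group G] (Z S : Subgroup G)
    [Z.Normal] [S.Normal] (hZS : Z ≤ S)
    (hbelow : ∀ H K : Subgroup G, IsChiefFactor G H K → H ≤ Z →
      ∃ p : ℕ, p.Prime ∧ K.relIndex H = p)
    {n : ℕ} (Hs : Fin n → Subgroup (G ⧸ Z))
    (hinv : ∀ i, (Hs i).Normal)
    (hsimple : ∀ i, IsSimpleGroup (Hs i))
    (hnonab : ∀ i, ∃ x ∈ Hs i, ∃ y ∈ Hs i, x * y ≠ y * x)
    (hind : iSupIndep Hs)
    (hsup : ⨆ i, Hs i = S.map (QuotientGroup.mk' Z))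
    (habove : IsSupersoluble (G ⧸ S)) :
    IsCSupersoluble G := by
  have hcenter (i : Fin n) : center (Hs i) = ⊥ :=
    have := hsimple i
    center_eq_bot_of_isSimpleGroup (hnonab i)
  intro H K hc
  refine hc.isSimpleFactor_of_inf_of_sup S (fun hcS => ?_) fun hcS => ?_
  · refine hcS.isSimpleFactor_of_inf_of_sup Z (fun hcZ => ?_) fun hcZ => ?_
    · obtain ⟨p, hp, hrel⟩ := hbelow _ _ hcZ inf_le_right
      exact isSimpleFactor_of_relIndex_eq_prime hp hcZ.le hrel
    · have hker : (QuotientGroup.mk' Z).ker ≤ K ⊓ S ⊔ Z :=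
        (QuotientGroup.ker_mk' Z).trans_le le_sup_right
      have hle : (H ⊓ S ⊔ Z).map (QuotientGroup.mk' Z) ≤ ⨆ i, Hs i :=
        hsup ▸ map_mono (sup_le inf_le_right hZS)
      exact IsSimpleFactor.of_map hcZ.le hker <|
        (hcZ.map (QuotientGroup.mk'_surjective Z) hker).isSimpleFactor_of_le_iSup
          hinv hsimple hcenter hind hle
  · have hker : (QuotientGroup.mk' S).ker ≤ K ⊔ S :=
      (QuotientGroup.ker_mk' S).trans_le le_sup_right
    obtain ⟨p, hp, hrel⟩ := habove _ _ (hcS.map (QuotientGroup.mk'_surjective S) hker)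
    exact IsSimpleFactor.of_map hcS.le hker
      (isSimpleFactor_of_relIndex_eq_prime hp (map_mono hcS.le) hrel)

/-- If `Z ≤ S` are normal in `G`, every chief factor of `G` below `Z` is cyclic of
prime order, `S/Z` is a direct product of `G`-invariant simple nonabelian groups,
and `G/S` is supersoluble, then `G` is c-supersoluble. -/
theorem stmt_16 {G : Type*} [Group G] [Finite G] (Z S : Subgroup G)
    [Z.Normal] [S.Normal] (hZS : Z ≤ S)
    (hbelow : ∀ H K : Subgroup G, IsChiefFactor G H K → H ≤ Z →
      ∃ p : ℕ, p.Prime ∧ K.relIndex H = p)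
    {n : ℕ} (Hs : Fin n → Subgroup (G ⧸ Z))
    (hinv : ∀ i, (Hs i).Normal)
    (hsimple : ∀ i, IsSimpleGroup (Hs i))
    (hnonab : ∀ i, ∃ x ∈ Hs i, ∃ y ∈ Hs i, x * y ≠ y * x)
    (hind : iSupIndep Hs)
    (hsup : ⨆ i, Hs i = S.map (QuotientGroup.mk' Z))
    (habove : IsSupersoluble (G ⧸ S)) :
    IsCSupersoluble G :=
  stmt_16_general Z S hZS hbelow Hs hinv hsimple hnonab hind hsup habove
end
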